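/- Let w be an admissible sequence. Then d_*(w), endowed with the norm ‖x‖ = sup_n (∑_{k=1}^n x̃_k)/(∑_{k=1}^n w_k), is a Banach space; in particular this expression defines a norm on d_*(w) and d_*(w) is complete with respect to it. -/

import Mathlib

open Filter Topology

/-- `rearrSum x n = ∑_{k=1}^n x̃_k`, the sum of the `n` largest values of `(|x_k|)`,
i.e. the `n`-th partial sum of the nonincreasing rearrangement of `(|x_k|)`; it is the
supremum of `∑_{k ∈ A} |x_k|` over finite sets `A ⊆ ℕ` of cardinality `n`. -/
noncomputable def rearrSum (x : ℕ → ℝ) (n : ℕ) : ℝ :=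
  sSup ((fun A : Finset ℕ => ∑ k ∈ A, |x k|) '' {A : Finset ℕ | A.card = n})

/-- A sequence of positive reals is admissible if it is nonincreasing, starts at `1`,
tends to `0` and is not summable. -/
def Admissible (w : ℕ → ℝ) : Prop :=
  (∀ n, 0 < w n) ∧ (∀ n, w (n + 1) ≤ w n) ∧ w 0 = 1 ∧
    Tendsto w atTop (𝓝 0) ∧ ¬ Summable w

/-- The underlying set of sequences of `d_*(w)`: sequences `x ∈ c₀` with
`(∑_{k=1}^n x̃_k) / (∑_{k=1}^n w_k) → 0`. -/
def dStarSet (w : ℕ → ℝ) : Set (ℕ → ℝ) :=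
  {x | Tendsto x atTop (𝓝 0) ∧
    Tendsto (fun n => rearrSum x n / ∑ k ∈ Finset.range n, w k) atTop (𝓝 0)}

/-- The norm of `d_*(w)`: `‖x‖ = sup_n (∑_{k=1}^n x̃_k) / (∑_{k=1}^n w_k)`. -/
noncomputable def dStarNorm (w : ℕ → ℝ) (x : ℕ → ℝ) : ℝ :=
  ⨆ n : ℕ, rearrSum x n / ∑ k ∈ Finset.range n, w k

/-- A normed space `D` is a representation of `d_*(w)` if there is a linear bijection `j`
from `D` onto the set of sequences of `d_*(w)` carrying the norm of `D` to the norm of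
`d_*(w)`; i.e. `D` "is" the space `d_*(w)` endowed with its canonical norm. -/
def IsDStarRep (w : ℕ → ℝ) (D : Type*) [NormedAddCommGroup D] [NormedSpace ℝ D]
    (j : D →ₗ[ℝ] (ℕ → ℝ)) : Prop :=
  Function.Injective j ∧ Set.range j = dStarSet w ∧ ∀ x : D, ‖x‖ = dStarNorm w (j x)

/-! The norm is the least `B ≥ 0` with `∑_{k ∈ A} |x_k| ≤ B · W_{|A|}` for every finite `A`,
where `W_n = w_0 + ⋯ + w_{n-1}`. The map `x ↦ rearrSum x n` is subadditive and absolutely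
homogeneous, which gives the norm axioms and the closure of `d_*(w)` under the linear
operations; single points give `|x_k| ≤ w_0 ‖x‖`. Hence a Cauchy sequence `(u_m)` converges
coordinatewise to some `x`, and letting `n → ∞` in `∑_{k ∈ A} |u_m k - u_n k| ≤ ε W_{|A|}`
gives the same bound for `u_m - x`. Both conditions defining `d_*(w)` pass to such
uniform limits, so `x ∈ d_*(w)` and `‖u_m - x‖ → 0`. -/

open Finset

lemma exists_forall_abs_le_of_tendsto {x : ℕ → ℝ} {a : ℝ} (hx : Tendsto x atTop (𝓝 a)) :
    ∃ C, ∀ k, |x k| ≤ C := by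
  obtain ⟨C, hC⟩ := hx.abs.bddAbove_range
  exact ⟨C, fun k => hC ⟨k, rfl⟩⟩

lemma tendsto_zero_of_forall_le_add {f : ℕ → ℝ} {g : ℕ → ℕ → ℝ} (hf : ∀ n, 0 ≤ f n)
    (hg : ∀ m, Tendsto (g m) atTop (𝓝 0)) (h : ∀ ε > 0, ∃ m, ∀ n, f n ≤ g m n + ε) :
    Tendsto f atTop (𝓝 0) := by
  rw [Metric.tendsto_atTop]
  intro ε hε
  obtain ⟨m, hm⟩ := h (ε / 2) (half_pos hε)
  obtain ⟨N, hN⟩ := Metric.tendsto_atTop.1 (hg m) (ε / 2) (half_pos hε)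
  refine ⟨N, fun n hn => ?_⟩
  have hgm := hN n hn
  rw [Real.dist_eq, sub_zero] at hgm ⊢
  rw [abs_of_nonneg (hf n)]
  linarith [hm n, le_abs_self (g m n)]

section RearrSum

variable {x y : ℕ → ℝ} {C B : ℝ} {n : ℕ}

lemma bddAbove_rearrSum_set (hC : ∀ k, |x k| ≤ C) (n : ℕ) :
    BddAbove ((fun A : Finset ℕ => ∑ k ∈ A, |x k|) '' {A : Finset ℕ | #A = n}) := by
  refine ⟨n * C, ?_⟩
  rintro _ ⟨A, hA, rfl⟩
  calc ∑ k ∈ A, |x k| ≤ ∑ _k ∈ A, C := sum_le_sum fun k _ => hC k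
    _ = n * C := by rw [sum_const, nsmul_eq_mul, hA]

lemma sum_abs_le_rearrSum (hC : ∀ k, |x k| ≤ C) (A : Finset ℕ) :
    ∑ k ∈ A, |x k| ≤ rearrSum x #A :=
  le_csSup (bddAbove_rearrSum_set hC _) ⟨A, rfl, rfl⟩

lemma rearrSum_le (h : ∀ A : Finset ℕ, #A = n → ∑ k ∈ A, |x k| ≤ B) : rearrSum x n ≤ B :=
  csSup_le ⟨_, range n, card_range n, rfl⟩ (by rintro _ ⟨A, hA, rfl⟩; exact h A hA)

lemma rearrSum_nonneg (x : ℕ → ℝ) (n : ℕ) : 0 ≤ rearrSum x n :=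
  Real.sSup_nonneg (by rintro _ ⟨A, -, rfl⟩; positivity)

lemma rearrSum_smul (c : ℝ) (x : ℕ → ℝ) (n : ℕ) : rearrSum (c • x) n = |c| * rearrSum x n := by
  have hsum : (fun A : Finset ℕ => ∑ k ∈ A, |(c • x) k|) =
      (|c| • ·) ∘ fun A : Finset ℕ => ∑ k ∈ A, |x k| := by
    funext A
    simp [abs_mul, mul_sum]
  rw [rearrSum, hsum, Set.image_comp, Set.image_smul, Real.sSup_smul_of_nonneg (abs_nonneg c),
    smul_eq_mul, rearrSum]

lemma rearrSum_zero (n : ℕ) : rearrSum 0 n = 0 := by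
  simpa using rearrSum_smul 0 0 n

lemma rearrSum_le_rearrSum_add (hy : ∀ k, |y k| ≤ C)
    (h : ∀ A : Finset ℕ, #A = n → ∑ k ∈ A, |x k - y k| ≤ B) :
    rearrSum x n ≤ rearrSum y n + B := by
  refine rearrSum_le fun A hA => ?_
  calc ∑ k ∈ A, |x k| ≤ ∑ k ∈ A, (|y k| + |x k - y k|) :=
        sum_le_sum fun k _ => by linarith [abs_sub_abs_le_abs_sub (x k) (y k)]
    _ = ∑ k ∈ A, |y k| + ∑ k ∈ A, |x k - y k| := sum_add_distrib
    _ ≤ rearrSum y n + B := add_le_add (hA ▸ sum_abs_le_rearrSum hy A) (h A hA)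

lemma rearrSum_add_le {D : ℝ} (hx : ∀ k, |x k| ≤ C) (hy : ∀ k, |y k| ≤ D) (n : ℕ) :
    rearrSum (x + y) n ≤ rearrSum x n + rearrSum y n :=
  rearrSum_le_rearrSum_add hx fun A hA => by simpa [hA] using sum_abs_le_rearrSum hy A

end RearrSum

section DStar

variable {w x y : ℕ → ℝ}

lemma zero_mem_dStarSet : (0 : ℕ → ℝ) ∈ dStarSet w :=
  ⟨tendsto_const_nhds, by simp [rearrSum_zero]⟩

lemma smul_mem_dStarSet (c : ℝ) (hx : x ∈ dStarSet w) : c • x ∈ dStarSet w := by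
  refine ⟨by rw [← smul_zero c]; exact hx.1.const_smul c, ?_⟩
  simp_rw [rearrSum_smul, mul_div_assoc]
  simpa using hx.2.const_mul |c|

lemma add_mem_dStarSet (hw : ∀ k, 0 ≤ w k) (hx : x ∈ dStarSet w) (hy : y ∈ dStarSet w) :
    x + y ∈ dStarSet w := by
  obtain ⟨Cx, hCx⟩ := exists_forall_abs_le_of_tendsto hx.1
  obtain ⟨Cy, hCy⟩ := exists_forall_abs_le_of_tendsto hy.1
  refine ⟨by rw [← add_zero (0 : ℝ)]; exact hx.1.add hy.1, ?_⟩
  refine squeeze_zero (fun n => div_nonneg (rearrSum_nonneg _ n) (sum_nonneg fun k _ => hw k))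
    (fun n => ?_) (by simpa using hx.2.add hy.2)
  rw [← add_div]
  exact div_le_div_of_nonneg_right (rearrSum_add_le hCx hCy n) (sum_nonneg fun k _ => hw k)

lemma sub_mem_dStarSet (hw : ∀ k, 0 ≤ w k) (hx : x ∈ dStarSet w) (hy : y ∈ dStarSet w) :
    x - y ∈ dStarSet w := by
  simpa [sub_eq_add_neg] using add_mem_dStarSet hw hx (smul_mem_dStarSet (-1) hy)

lemma dStarNorm_nonneg (hw : ∀ k, 0 ≤ w k) (x : ℕ → ℝ) : 0 ≤ dStarNorm w x :=
  Real.iSup_nonneg fun n => div_nonneg (rearrSum_nonneg x n) (sum_nonneg fun k _ => hw k)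

lemma dStarNorm_smul (c : ℝ) (x : ℕ → ℝ) : dStarNorm w (c • x) = |c| * dStarNorm w x := by
  simp_rw [dStarNorm, rearrSum_smul, mul_div_assoc, Real.mul_iSup_of_nonneg (abs_nonneg c)]

lemma dStarNorm_zero : dStarNorm w 0 = 0 := by
  simpa using dStarNorm_smul (w := w) 0 0

lemma rearrSum_div_le_dStarNorm (hx : x ∈ dStarSet w) (n : ℕ) :
    rearrSum x n / ∑ k ∈ range n, w k ≤ dStarNorm w x :=
  le_ciSup hx.2.bddAbove_range n

lemma dStarNorm_add_le (hw : ∀ k, 0 ≤ w k) (hx : x ∈ dStarSet w) (hy : y ∈ dStarSet w) :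
    dStarNorm w (x + y) ≤ dStarNorm w x + dStarNorm w y := by
  obtain ⟨Cx, hCx⟩ := exists_forall_abs_le_of_tendsto hx.1
  obtain ⟨Cy, hCy⟩ := exists_forall_abs_le_of_tendsto hy.1
  refine ciSup_le fun n => ?_
  calc rearrSum (x + y) n / ∑ k ∈ range n, w k
      ≤ (rearrSum x n + rearrSum y n) / ∑ k ∈ range n, w k :=
        div_le_div_of_nonneg_right (rearrSum_add_le hCx hCy n) (sum_nonneg fun k _ => hw k)
    _ ≤ dStarNorm w x + dStarNorm w y := by
        rw [add_div]
        exact add_le_add (rearrSum_div_le_dStarNorm hx n) (rearrSum_div_le_dStarNorm hy n)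

lemma sum_abs_le_dStarNorm_mul (hw : ∀ k, 0 < w k) (hx : x ∈ dStarSet w) (A : Finset ℕ) :
    ∑ k ∈ A, |x k| ≤ dStarNorm w x * ∑ k ∈ range #A, w k := by
  obtain ⟨C, hC⟩ := exists_forall_abs_le_of_tendsto hx.1
  rcases A.eq_empty_or_nonempty with rfl | hA
  · simp
  have hW : 0 < ∑ k ∈ range #A, w k :=
    sum_pos (fun k _ => hw k) (nonempty_range_iff.2 hA.card_pos.ne')
  exact (sum_abs_le_rearrSum hC A).trans
    ((div_le_iff₀ hW).1 (rearrSum_div_le_dStarNorm hx #A))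

lemma dStarNorm_le_of_forall_sum_abs_le (hw : ∀ k, 0 ≤ w k) (hB : 0 ≤ B)
    (h : ∀ A : Finset ℕ, ∑ k ∈ A, |x k| ≤ B * ∑ k ∈ range #A, w k) : dStarNorm w x ≤ B := by
  refine ciSup_le fun n => ?_
  rcases (sum_nonneg fun k _ => hw k : 0 ≤ ∑ k ∈ range n, w k).eq_or_lt with hW | hW
  · rwa [← hW, div_zero]
  · exact (div_le_iff₀ hW).2 (rearrSum_le fun A hA => hA ▸ h A)

lemma abs_le_mul_dStarNorm (hw : ∀ k, 0 < w k) (hx : x ∈ dStarSet w) (k : ℕ) :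
    |x k| ≤ w 0 * dStarNorm w x := by
  simpa [mul_comm] using sum_abs_le_dStarNorm_mul hw hx {k}

lemma dStarNorm_eq_zero_iff (hw : ∀ k, 0 < w k) (hx : x ∈ dStarSet w) :
    dStarNorm w x = 0 ↔ x = 0 := by
  refine ⟨fun h => funext fun k => ?_, fun h => h ▸ dStarNorm_zero⟩
  simpa [h] using abs_le_mul_dStarNorm hw hx k

end DStar

section Complete

variable {w x : ℕ → ℝ} {u : ℕ → ℕ → ℝ}

lemma mem_dStarSet_of_forall_sum_abs_sub_le (hw : ∀ k, 0 < w k) (hu : ∀ m, u m ∈ dStarSet w)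
    (h : ∀ ε > 0, ∃ m, ∀ A : Finset ℕ, ∑ k ∈ A, |x k - u m k| ≤ ε * ∑ k ∈ range #A, w k) :
    x ∈ dStarSet w := by
  constructor
  · refine (tendsto_zero_iff_abs_tendsto_zero x).2 <| tendsto_zero_of_forall_le_add
      (fun k => abs_nonneg (x k)) (fun m => by simpa using (hu m).1.abs) fun ε hε => ?_
    obtain ⟨m, hm⟩ := h (ε / w 0) (div_pos hε (hw 0))
    refine ⟨m, fun k => ?_⟩
    have hk : |x k - u m k| ≤ ε := by
      simpa [div_mul_cancel₀ _ (hw 0).ne'] using hm {k}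
    show |x k| ≤ |u m k| + ε
    linarith [abs_sub_abs_le_abs_sub (x k) (u m k)]
  · refine tendsto_zero_of_forall_le_add
      (fun n => div_nonneg (rearrSum_nonneg x n) (sum_nonneg fun k _ => (hw k).le))
      (fun m => (hu m).2) fun ε hε => ?_
    obtain ⟨m, hm⟩ := h ε hε
    obtain ⟨C, hC⟩ := exists_forall_abs_le_of_tendsto (hu m).1
    refine ⟨m, fun n => ?_⟩
    have hle := rearrSum_le_rearrSum_add (n := n) hC fun A hA => hA ▸ hm A
    rcases (sum_nonneg fun k _ => (hw k).le : 0 ≤ ∑ k ∈ range n, w k).eq_or_lt with hW | hW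
    · rw [← hW, div_zero, div_zero, zero_add]
      exact hε.le
    · rwa [div_le_iff₀ hW, add_mul, div_mul_cancel₀ _ hW.ne']

lemma sum_abs_sub_le_of_cauchy (hw : ∀ k, 0 < w k) (hu : ∀ m, u m ∈ dStarSet w)
    (hcau : ∀ ε > 0, ∃ N, ∀ m ≥ N, ∀ n ≥ N, dStarNorm w (u m - u n) < ε)
    (hx : ∀ k, Tendsto (fun m => u m k) atTop (𝓝 (x k))) {ε : ℝ} (hε : 0 < ε) :
    ∃ N, ∀ m ≥ N, ∀ A : Finset ℕ, ∑ k ∈ A, |u m k - x k| ≤ ε * ∑ k ∈ range #A, w k := by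
  obtain ⟨N, hN⟩ := hcau ε hε
  refine ⟨N, fun m hm A => le_of_tendsto
    (tendsto_finsetSum A fun k _ => (tendsto_const_nhds.sub (hx k)).abs) ?_⟩
  filter_upwards [eventually_ge_atTop N] with n hn
  calc ∑ k ∈ A, |u m k - u n k| ≤ dStarNorm w (u m - u n) * ∑ k ∈ range #A, w k :=
        sum_abs_le_dStarNorm_mul hw (sub_mem_dStarSet (fun k => (hw k).le) (hu m) (hu n)) A
    _ ≤ ε * ∑ k ∈ range #A, w k :=
        mul_le_mul_of_nonneg_right (hN m hm n hn).le (sum_nonneg fun k _ => (hw k).le)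

theorem exists_tendsto_dStarNorm_of_cauchy (hw : ∀ k, 0 < w k) (hu : ∀ m, u m ∈ dStarSet w)
    (hcau : ∀ ε > 0, ∃ N, ∀ m ≥ N, ∀ n ≥ N, dStarNorm w (u m - u n) < ε) :
    ∃ x ∈ dStarSet w, Tendsto (fun n => dStarNorm w (u n - x)) atTop (𝓝 0) := by
  have hw_nonneg : ∀ k, 0 ≤ w k := fun k => (hw k).le
  have hcoord : ∀ k, CauchySeq fun m => u m k := fun k => by
    refine Metric.cauchySeq_iff.2 fun ε hε => ?_
    obtain ⟨N, hN⟩ := hcau (ε / w 0) (div_pos hε (hw 0))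
    refine ⟨N, fun m hm n hn => ?_⟩
    calc dist (u m k) (u n k) = |(u m - u n) k| := rfl
      _ ≤ w 0 * dStarNorm w (u m - u n) :=
          abs_le_mul_dStarNorm hw (sub_mem_dStarSet hw_nonneg (hu m) (hu n)) k
      _ < w 0 * (ε / w 0) := mul_lt_mul_of_pos_left (hN m hm n hn) (hw 0)
      _ = ε := mul_div_cancel₀ ε (hw 0).ne'
  choose x hx using fun k => cauchySeq_tendsto_of_complete (hcoord k)
  have hxmem : x ∈ dStarSet w := mem_dStarSet_of_forall_sum_abs_sub_le hw hu fun ε hε => by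
    obtain ⟨N, hN⟩ := sum_abs_sub_le_of_cauchy hw hu hcau hx hε
    exact ⟨N, fun A => by simpa only [abs_sub_comm] using hN N le_rfl A⟩
  refine ⟨x, hxmem, Metric.tendsto_atTop.2 fun ε hε => ?_⟩
  obtain ⟨N, hN⟩ := sum_abs_sub_le_of_cauchy hw hu hcau hx (half_pos hε)
  refine ⟨N, fun m hm => ?_⟩
  rw [Real.dist_eq, sub_zero, abs_of_nonneg (dStarNorm_nonneg hw_nonneg _)]
  exact (dStarNorm_le_of_forall_sum_abs_le hw_nonneg (half_pos hε).le (hN m hm)).trans_lt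
    (half_lt_self hε)

end Complete

/-- for an admissible `w`, the set `d_*(w)` is a linear subspace of the
space of real sequences, `‖x‖ = sup_n (∑_{k=1}^n x̃_k)/(∑_{k=1}^n w_k)` defines a norm on
it, and `d_*(w)` is complete for this norm; i.e. `d_*(w)` is a Banach space. -/
theorem dStar_banach (w : ℕ → ℝ) (hw : Admissible w) :
    (0 : ℕ → ℝ) ∈ dStarSet w ∧
    (∀ x ∈ dStarSet w, ∀ y ∈ dStarSet w, x + y ∈ dStarSet w) ∧
    (∀ (c : ℝ), ∀ x ∈ dStarSet w, c • x ∈ dStarSet w) ∧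
    (∀ x ∈ dStarSet w, (dStarNorm w x = 0 ↔ x = 0)) ∧
    (∀ (c : ℝ), ∀ x ∈ dStarSet w, dStarNorm w (c • x) = |c| * dStarNorm w x) ∧
    (∀ x ∈ dStarSet w, ∀ y ∈ dStarSet w,
      dStarNorm w (x + y) ≤ dStarNorm w x + dStarNorm w y) ∧
    (∀ u : ℕ → (ℕ → ℝ), (∀ n, u n ∈ dStarSet w) →
      (∀ ε : ℝ, 0 < ε → ∃ N : ℕ, ∀ m ≥ N, ∀ n ≥ N, dStarNorm w (u m - u n) < ε) →
      ∃ x ∈ dStarSet w, Tendsto (fun n => dStarNorm w (u n - x)) atTop (𝓝 0)) := by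
  have hpos : ∀ k, 0 < w k := hw.1
  have hnonneg : ∀ k, 0 ≤ w k := fun k => (hpos k).le
  exact ⟨zero_mem_dStarSet, fun _ hx _ hy => add_mem_dStarSet hnonneg hx hy,
    fun c _ hx => smul_mem_dStarSet c hx, fun _ hx => dStarNorm_eq_zero_iff hpos hx,
    fun c x _ => dStarNorm_smul c x, fun _ hx _ hy => dStarNorm_add_le hnonneg hx hy,
    fun _ hu hcau => exists_tendsto_dStarNorm_of_cauchy hpos hu hcau⟩
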